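/- arXiv:2202.09981 — 3 statements merged into one kernel-verified Lean document; each statement's English description precedes it below -/
import Mathlib

section
/- Let n ≥ 2, m ≥ 1, let K ⊆ {0,…,m−1} with |K| ≤ m−1, let b : K → {0,…,n−1}, and let H = {i ∈ {0,…,n−1}^m : i_k = b(k) for all k ∈ K} be the corresponding direct-product subset, with the coordinates of P_H(v) identified with {0,…,n−1}^{m−|K|} via the positions outside K. Then P_H(C_n(r,m)) = C_n(r, m−|K|) whenever r ≤ m−|K|, and P_H(D_n(r,m)) = D_n(r−|K|, m−|K|) whenever r ≥ |K|. -/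
open Finset

/-- The `l`-th subvector in the concatenation decomposition:
`(subvec v l) i' = v (i'|l)`. -/
def subvec {n m : ℕ} (v : (Fin (m + 1) → Fin n) → ZMod 2) (l : Fin n) :
    (Fin m → Fin n) → ZMod 2 :=
  fun i' => v (Fin.snoc i' l)

/-- The Berman code `D_n(r,m)`, defined recursively. -/
def BermanD (n : ℕ) : (m : ℕ) → ℕ → Set ((Fin m → Fin n) → ZMod 2)
  | 0, _ => {0}
  | m + 1, r =>
    if r = 0 then {v | ∑ i, v i = 0}
    else if m + 1 ≤ r then {0}
    else {v | (∀ l : Fin n, subvec v l ∈ BermanD n m (r - 1)) ∧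
              (fun i' => ∑ l : Fin n, subvec v l i') ∈ BermanD n m r}

/-- The dual Berman code `C_n(r,m)`, defined recursively. -/
def BermanC (n : ℕ) : (m : ℕ) → ℕ → Set ((Fin m → Fin n) → ZMod 2)
  | 0, _ => Set.univ
  | m + 1, r =>
    if r = 0 then {v | ∃ c : ZMod 2, ∀ i, v i = c}
    else if m + 1 ≤ r then Set.univ
    else {v | ∃ (u : (Fin m → Fin n) → ZMod 2) (w : Fin n → (Fin m → Fin n) → ZMod 2),
            u ∈ BermanC n m r ∧
            (∀ l : Fin n, (l : ℕ) < n - 1 → w l ∈ BermanC n m (r - 1)) ∧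
            (∀ l : Fin n, (l : ℕ) = n - 1 → w l = 0) ∧
            (∀ l : Fin n, subvec v l = u + w l)}

/-- Hamming weight of a binary vector. -/
def hwt {n m : ℕ} (v : (Fin m → Fin n) → ZMod 2) : ℕ :=
  (Finset.univ.filter fun i => v i ≠ 0).card

/-- `preceq j i` means `j ⪯ i`: for every position `k`, either `j k = 0` or `j k = i k`. -/
def preceq {n m : ℕ} (j i : Fin m → Fin n) : Prop :=
  ∀ k, (j k : ℕ) = 0 ∨ j k = i k

instance {n m : ℕ} (j i : Fin m → Fin n) : Decidable (preceq j i) :=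
  inferInstanceAs (Decidable (∀ k, (j k : ℕ) = 0 ∨ j k = i k))

/-- Hamming weight of an index tuple. -/
def wtTuple {n m : ℕ} (i : Fin m → Fin n) : ℕ :=
  (Finset.univ.filter fun k => (i k : ℕ) ≠ 0).card

/-- The vector `c_m(i')`: the indicator of `{i : i ⪯ i'}`. -/
def cVec {n : ℕ} (m : ℕ) (i' : Fin m → Fin n) : (Fin m → Fin n) → ZMod 2 :=
  fun i => if preceq i i' then 1 else 0

/-- The vector `d_m(i')`: the indicator of `{i : i' ⪯ i}`. -/
def dVec {n : ℕ} (m : ℕ) (i' : Fin m → Fin n) : (Fin m → Fin n) → ZMod 2 :=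
  fun i => if preceq i' i then 1 else 0

/-- The matrix `A_m = A_1^{⊗m}`: its entry in row `i` and column `j` is `1` iff `j ⪯ i`. -/
def Amat (n m : ℕ) : Matrix (Fin m → Fin n) (Fin m → Fin n) (ZMod 2) :=
  fun i j => if preceq j i then 1 else 0

/-!
A word of length `n^(m+1)` is a concatenation `(v_0|…|v_{n-1})` of `n` blocks of length `n^m`,
and we puncture by induction on `m`, looking at the last coordinate. If it is fixed to `c`, the
puncturing factors through the `c`-th block, and the `c`-th blocks of `C_n(r,m+1)` and
`D_n(r,m+1)` fill out exactly `C_n(r,m)` and `D_n(r-1,m)`. If it is free, the puncturing acts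
blockwise and commutes with the recursive constructions: blocks lift into the smaller codes, and
for `D` the error in the block sum is absorbed by a single block since `D_n(r,m) ⊆ D_n(r-1,m)`.
For `D` the induction has to carry the range `r < |K|` as well, where the punctured code is
everything; at `r = 0` this says that a parity check is lost once a coordinate is forgotten.
-/

section

variable {n m m' M M' : ℕ}
open Function

def concatSubvecs (f : Fin n → (Fin m → Fin n) → ZMod 2) : (Fin (m + 1) → Fin n) → ZMod 2 :=
  fun i => f (i (Fin.last m)) (Fin.init i)

@[simp]
theorem subvec_concatSubvecs (f : Fin n → (Fin m → Fin n) → ZMod 2) (l : Fin n) :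
    subvec (concatSubvecs f) l = f l := by
  funext i
  simp [concatSubvecs, subvec]

@[simp]
theorem subvec_zero (l : Fin n) : subvec (0 : (Fin (m + 1) → Fin n) → ZMod 2) l = 0 := rfl

theorem subvec_add (v w : (Fin (m + 1) → Fin n) → ZMod 2) (l : Fin n) :
    subvec (v + w) l = subvec v l + subvec w l := rfl

theorem subvec_injective :
    Injective (fun (v : (Fin (m + 1) → Fin n) → ZMod 2) (l : Fin n) => subvec v l) := by
  intro v w h
  funext i
  rw [← Fin.snoc_init_self i]
  exact congrFun (congrFun h (i (Fin.last m))) (Fin.init i)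

theorem pi_zmod_two_add_self {α : Type*} (a : α → ZMod 2) : a + a = 0 :=
  funext fun _ => CharTwo.add_self_eq_zero _

theorem sum_eq_sum_subvec (v : (Fin (m + 1) → Fin n) → ZMod 2) :
    ∑ i, v i = ∑ l, ∑ i', subvec v l i' := by
  rw [← Fintype.sum_prod_type', ← (Fin.snocEquiv fun _ => Fin n).sum_comp]
  rfl

/-- The set `{(v_0|…|v_{n-1}) : v_l ∈ A, ∑ v_l ∈ B}` of the recursion for `D_n`. -/
def dStep (A B : Set ((Fin m → Fin n) → ZMod 2)) : Set ((Fin (m + 1) → Fin n) → ZMod 2) :=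
  {v | (∀ l, subvec v l ∈ A) ∧ ∑ l, subvec v l ∈ B}

/-- The set `{(u+w_0|…|u+w_{n-2}|u) : u ∈ U, w_l ∈ W}` of the recursion for `C_n`. -/
def cStep (U W : Set ((Fin m → Fin n) → ZMod 2)) : Set ((Fin (m + 1) → Fin n) → ZMod 2) :=
  {v | ∃ (u : (Fin m → Fin n) → ZMod 2) (w : Fin n → (Fin m → Fin n) → ZMod 2), u ∈ U ∧
    (∀ l : Fin n, (l : ℕ) < n - 1 → w l ∈ W) ∧ (∀ l : Fin n, (l : ℕ) = n - 1 → w l = 0) ∧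
    ∀ l, subvec v l = u + w l}

theorem bermanD_of_le {r : ℕ} (h : m ≤ r) : BermanD n m r = {0} := by
  cases m with
  | zero => rfl
  | succ m => simp only [BermanD, if_pos h]; split_ifs <;> simp_all

theorem bermanD_zero_eq : BermanD n m 0 = {v | ∑ i, v i = 0} := by
  cases m with
  | zero =>
    ext v
    simp only [BermanD, Set.mem_singleton_iff, Set.mem_ofPred_eq, Fintype.sum_unique]
    exact ⟨fun hv => hv ▸ rfl, fun hv => funext fun i => Subsingleton.elim i default ▸ hv⟩
  | succ m => simp [BermanD]

theorem bermanD_succ_succ (r : ℕ) :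
    BermanD n (m + 1) (r + 1) = dStep (BermanD n m r) (BermanD n m (r + 1)) := by
  rcases le_or_gt m r with hle | hlt
  · rw [bermanD_of_le (by omega : m + 1 ≤ r + 1), bermanD_of_le hle,
      bermanD_of_le (by omega : m ≤ r + 1)]
    ext v
    simp only [dStep, Set.mem_singleton_iff, Set.mem_ofPred_eq]
    refine ⟨fun hv => by simp [hv], fun hv => subvec_injective (funext hv.1)⟩
  · simp only [BermanD, if_neg r.succ_ne_zero, if_neg (show ¬ m + 1 ≤ r + 1 by omega), dStep,
      Finset.sum_fn, Nat.add_sub_cancel]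

theorem dStep_univ_bermanD_zero :
    dStep (Set.univ : Set ((Fin m → Fin n) → ZMod 2)) (BermanD n m 0) = BermanD n (m + 1) 0 := by
  ext v
  rw [bermanD_zero_eq, bermanD_zero_eq, Set.mem_ofPred_eq, sum_eq_sum_subvec, Finset.sum_comm]
  simp [dStep]

theorem bermanC_of_le {r : ℕ} (h : m ≤ r) : BermanC n m r = Set.univ := by
  cases m with
  | zero => rfl
  | succ m => simp only [BermanC, if_pos h]; split_ifs <;> simp_all

theorem bermanC_zero_eq : BermanC n m 0 = {v | ∃ c, ∀ i, v i = c} := by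
  cases m with
  | zero =>
    refine (Set.eq_univ_of_forall fun v => ?_).symm
    exact ⟨v default, fun i => by rw [Subsingleton.elim i default]⟩
  | succ m => simp [BermanC]

theorem bermanC_succ_succ_of_lt {r : ℕ} (hrm : r < m) :
    BermanC n (m + 1) (r + 1) = cStep (BermanC n m (r + 1)) (BermanC n m r) := by
  simp only [BermanC, if_neg r.succ_ne_zero, if_neg (show ¬ m + 1 ≤ r + 1 by omega), cStep,
    Nat.add_sub_cancel]

theorem cStep_univ (hn : 0 < n) :
    cStep (Set.univ : Set ((Fin m → Fin n) → ZMod 2)) Set.univ = Set.univ := by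
  set top : Fin n := ⟨n - 1, by omega⟩
  refine Set.eq_univ_of_forall fun v => ⟨subvec v top,
    fun l => if (l : ℕ) = n - 1 then 0 else subvec v l + subvec v top,
    trivial, fun _ _ => trivial, fun l hl => if_pos hl, fun l => ?_⟩
  dsimp only
  split_ifs with hl
  · rw [add_zero, show l = top from Fin.ext hl]
  · rw [add_left_comm, pi_zmod_two_add_self, add_zero]

theorem bermanC_succ_succ (hn : 0 < n) (r : ℕ) :
    BermanC n (m + 1) (r + 1) = cStep (BermanC n m (r + 1)) (BermanC n m r) := by
  rcases le_or_gt m r with hle | hlt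
  · rw [bermanC_of_le (by omega : m + 1 ≤ r + 1), bermanC_of_le (by omega : m ≤ r + 1),
      bermanC_of_le hle, cStep_univ hn]
  · exact bermanC_succ_succ_of_lt hlt

theorem bermanD_succ_subset : ∀ {m : ℕ} (r : ℕ), BermanD n m (r + 1) ⊆ BermanD n m r
  | 0, _ => by simp [BermanD]
  | m + 1, 0 => fun v hv => by
    rw [bermanD_succ_succ 0, bermanD_zero_eq] at hv
    rw [bermanD_zero_eq, Set.mem_ofPred_eq, sum_eq_sum_subvec]
    exact Finset.sum_eq_zero fun l _ => hv.1 l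
  | m + 1, r + 1 => fun v hv => by
    rw [bermanD_succ_succ] at hv ⊢
    exact ⟨fun l => bermanD_succ_subset r (hv.1 l), bermanD_succ_subset (r + 1) hv.2⟩

theorem bermanD_anti : Antitone (BermanD n m) :=
  antitone_nat_of_succ_le bermanD_succ_subset

theorem zero_mem_bermanD (m r : ℕ) : (0 : (Fin m → Fin n) → ZMod 2) ∈ BermanD n m r :=
  bermanD_anti (le_max_left r m) (by rw [bermanD_of_le (le_max_right r m)]; rfl)

theorem add_mem_bermanD : ∀ {m r : ℕ} {v w : (Fin m → Fin n) → ZMod 2},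
    v ∈ BermanD n m r → w ∈ BermanD n m r → v + w ∈ BermanD n m r
  | 0, _, v, w, hv, hw => by simp_all [BermanD]
  | m + 1, 0, v, w, hv, hw => by
    rw [bermanD_zero_eq] at hv hw ⊢
    simp_all [Finset.sum_add_distrib]
  | m + 1, r + 1, v, w, hv, hw => by
    rw [bermanD_succ_succ] at hv hw ⊢
    refine ⟨fun l => add_mem_bermanD (hv.1 l) (hw.1 l), ?_⟩
    simpa only [subvec_add, Finset.sum_add_distrib] using add_mem_bermanD hv.2 hw.2

def bermanDAddSubmonoid (n m r : ℕ) : AddSubmonoid ((Fin m → Fin n) → ZMod 2) where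
  carrier := BermanD n m r
  add_mem' := add_mem_bermanD
  zero_mem' := zero_mem_bermanD m r

theorem coe_bermanDAddSubmonoid (m r : ℕ) :
    (bermanDAddSubmonoid n m r : Set ((Fin m → Fin n) → ZMod 2)) = BermanD n m r := rfl

theorem bermanC_subset_succ : ∀ {m : ℕ} (r : ℕ), BermanC n m r ⊆ BermanC n m (r + 1)
  | 0, _ => by simp [BermanC]
  | m + 1, r => fun v hv => by
    rcases le_or_gt m r with hle | hlt
    · rw [bermanC_of_le (by omega : m + 1 ≤ r + 1)]; trivial
    rw [bermanC_succ_succ_of_lt hlt]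
    rcases r with _ | r
    · obtain ⟨c, hc⟩ := bermanC_zero_eq ▸ hv
      refine ⟨fun _ => c, 0, bermanC_subset_succ 0 (bermanC_zero_eq ▸ ⟨c, fun _ => rfl⟩),
        fun _ _ => bermanC_zero_eq ▸ ⟨0, fun _ => rfl⟩, fun _ _ => rfl,
        fun l => funext fun i => by simp [subvec, hc]⟩
    · rw [bermanC_succ_succ_of_lt (by omega)] at hv
      obtain ⟨u, w, hu, hw, hlast, hv⟩ := hv
      exact ⟨u, w, bermanC_subset_succ _ hu, fun l hl => bermanC_subset_succ _ (hw l hl), hlast, hv⟩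

theorem bermanC_mono : Monotone (BermanC n m) :=
  monotone_nat_of_le_succ bermanC_subset_succ

theorem zero_mem_bermanC (m r : ℕ) : (0 : (Fin m → Fin n) → ZMod 2) ∈ BermanC n m r :=
  bermanC_mono (Nat.zero_le r) (bermanC_zero_eq ▸ ⟨0, fun _ => rfl⟩)

theorem add_mem_bermanC : ∀ {m r : ℕ} {v w : (Fin m → Fin n) → ZMod 2},
    v ∈ BermanC n m r → w ∈ BermanC n m r → v + w ∈ BermanC n m r
  | 0, _, _, _, _, _ => trivial
  | m + 1, 0, v, w, hv, hw => by
    rw [bermanC_zero_eq] at hv hw ⊢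
    obtain ⟨⟨c, hc⟩, ⟨d, hd⟩⟩ := And.intro hv hw
    exact ⟨c + d, fun i => by simp [hc, hd]⟩
  | m + 1, r + 1, v, w, hv, hw => by
    rcases le_or_gt m r with hle | hlt
    · rw [bermanC_of_le (by omega : m + 1 ≤ r + 1)]; trivial
    rw [bermanC_succ_succ_of_lt hlt] at hv hw ⊢
    obtain ⟨u, w₁, hu, hw₁, hlast₁, hv⟩ := hv
    obtain ⟨u', w₂, hu', hw₂, hlast₂, hw⟩ := hw
    refine ⟨u + u', w₁ + w₂, add_mem_bermanC hu hu',
      fun l hl => add_mem_bermanC (hw₁ l hl) (hw₂ l hl),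
      fun l hl => by simp [hlast₁ l hl, hlast₂ l hl], fun l => ?_⟩
    rw [subvec_add, hv, hw, Pi.add_apply]
    abel

def bermanCAddSubmonoid (n m r : ℕ) : AddSubmonoid ((Fin m → Fin n) → ZMod 2) where
  carrier := BermanC n m r
  add_mem' := add_mem_bermanC
  zero_mem' := zero_mem_bermanC m r

theorem coe_bermanCAddSubmonoid (m r : ℕ) :
    (bermanCAddSubmonoid n m r : Set ((Fin m → Fin n) → ZMod 2)) = BermanC n m r := rfl

theorem image_subvec_dStep (hn : 2 ≤ n) (c : Fin n) (A : AddSubmonoid ((Fin m → Fin n) → ZMod 2))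
    {B : Set ((Fin m → Fin n) → ZMod 2)} (hB : 0 ∈ B) :
    (subvec · c) '' dStep A B = A := by
  refine Set.Subset.antisymm (Set.image_subset_iff.mpr fun v hv => hv.1 c) fun a ha => ?_
  have : Nontrivial (Fin n) := Fin.nontrivial_iff_two_le.mpr hn
  obtain ⟨c', hc'⟩ := exists_ne c
  -- the copies of `a` at positions `c` and `c'` cancel in the sum
  refine ⟨concatSubvecs (Pi.single c a + Pi.single c' a), ⟨fun l => ?_, ?_⟩, ?_⟩
  · simp only [subvec_concatSubvecs, Pi.add_apply, Pi.single_apply]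
    split_ifs <;> simp [ha, A.add_mem ha ha]
  · simpa [Finset.sum_add_distrib, pi_zmod_two_add_self] using hB
  · simp [hc'.symm]

theorem image_subvec_cStep (c : Fin n) (U : AddSubmonoid ((Fin m → Fin n) → ZMod 2))
    {W : Set ((Fin m → Fin n) → ZMod 2)} (hWU : W ⊆ U) (hW : 0 ∈ W) :
    (subvec · c) '' cStep U W = U := by
  refine Set.Subset.antisymm (Set.image_subset_iff.mpr fun v hv => ?_) fun u hu => ?_
  · obtain ⟨u, w, hu, hw, hlast, hv⟩ := hv
    rw [Set.mem_preimage, hv c]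
    rcases lt_or_ge (c : ℕ) (n - 1) with hc | hc
    · exact U.add_mem hu (hWU (hw c hc))
    · rw [hlast c (by omega), add_zero]; exact hu
  · exact ⟨concatSubvecs fun _ => u, ⟨u, 0, hu, fun _ _ => hW, fun _ _ => rfl, by simp⟩, by simp⟩

theorem image_dStep (hn : 0 < n)
    (φ : ((Fin m → Fin n) → ZMod 2) →+ ((Fin m' → Fin n) → ZMod 2))
    {P : ((Fin (m + 1) → Fin n) → ZMod 2) → ((Fin (m' + 1) → Fin n) → ZMod 2)}
    (hP : ∀ v l, subvec (P v) l = φ (subvec v l))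
    (A : AddSubmonoid ((Fin m → Fin n) → ZMod 2)) {B : Set ((Fin m → Fin n) → ZMod 2)}
    (hBA : B ⊆ A) :
    P '' dStep A B = dStep (φ '' A) (φ '' B) := by
  refine Set.Subset.antisymm (Set.image_subset_iff.mpr fun v hv => ⟨fun l => ?_, ?_⟩) ?_
  · rw [hP]; exact Set.mem_image_of_mem φ (hv.1 l)
  · simp only [hP, ← map_sum]; exact Set.mem_image_of_mem φ hv.2
  rintro t ⟨ht, d, hd, hdt⟩
  choose x hx hxt using ht
  -- move the defect `∑ x + d` of the block sum into block `0`; `φ` kills it as `φ d = ∑ φ (x l)`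
  set y := x + Pi.single ⟨0, hn⟩ (∑ l, x l + d)
  have hyA : ∀ l, y l ∈ A := fun l => by
    simp only [y, Pi.add_apply, Pi.single_apply]
    split_ifs
    · exact A.add_mem (hx l) (A.add_mem (sum_mem fun l _ => hx l) (hBA hd))
    · simpa using hx l
  refine ⟨concatSubvecs y, ⟨fun l => by simpa using hyA l, ?_⟩,
    subvec_injective (funext fun l => ?_)⟩
  · simpa [y, Finset.sum_add_distrib, ← add_assoc, pi_zmod_two_add_self] using hd
  · simp only [hP, subvec_concatSubvecs, y, Pi.add_apply, map_add, Pi.single_apply]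
    split_ifs
    · simp [map_sum, hxt, hdt, pi_zmod_two_add_self]
    · simp [hxt]

theorem image_cStep
    (φ : ((Fin m → Fin n) → ZMod 2) →+ ((Fin m' → Fin n) → ZMod 2))
    {P : ((Fin (m + 1) → Fin n) → ZMod 2) → ((Fin (m' + 1) → Fin n) → ZMod 2)}
    (hP : ∀ v l, subvec (P v) l = φ (subvec v l)) (U W : Set ((Fin m → Fin n) → ZMod 2)) :
    P '' cStep U W = cStep (φ '' U) (φ '' W) := by
  refine Set.Subset.antisymm (Set.image_subset_iff.mpr fun v hv => ?_) ?_
  · obtain ⟨u, w, hu, hw, hlast, hv⟩ := hv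
    exact ⟨φ u, fun l => φ (w l), Set.mem_image_of_mem φ hu,
      fun l hl => Set.mem_image_of_mem φ (hw l hl), fun l hl => by simp [hlast l hl],
      fun l => by rw [hP, hv, map_add]⟩
  rintro t ⟨_, w', ⟨u, hu, rfl⟩, hw', hlast', ht⟩
  choose w hw hww' using hw'
  have hw₀ : ∀ l : Fin n, (l : ℕ) = n - 1 → (if hl : (l : ℕ) < n - 1 then w l hl else 0) = 0 :=
    fun l hl => dif_neg (by omega)
  refine ⟨concatSubvecs fun l => u + if hl : (l : ℕ) < n - 1 then w l hl else 0,
    ⟨u, _, hu, fun l hl => by simpa only [dif_pos hl] using hw l hl, hw₀,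
      fun l => subvec_concatSubvecs _ l⟩, subvec_injective (funext fun l => ?_)⟩
  dsimp only
  rw [hP, subvec_concatSubvecs, map_add, ht]
  split_ifs with hl
  · rw [hww']
  · rw [map_zero, hlast' l (by omega)]

theorem extend_eq_snoc_of_forall_castSucc {h : Fin m' → Fin (M + 1)} {h' : Fin m' → Fin M}
    (hh' : Injective h') (hcomp : ∀ k, h k = (h' k).castSucc) (j : Fin m' → Fin n)
    (b : Fin (M + 1) → Fin n) :
    extend h j b = Fin.snoc (extend h' j (Fin.init b)) (b (Fin.last M)) := by
  obtain rfl : h = Fin.castSucc ∘ h' := funext hcomp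
  funext i
  induction i using Fin.lastCases with
  | last =>
    rw [Fin.snoc_last, extend_apply']
    rintro ⟨k, hk⟩
    exact Fin.castSucc_ne_last _ hk
  | cast i =>
    rw [Fin.snoc_castSucc]
    by_cases hi : ∃ k, h' k = i
    · obtain ⟨k, rfl⟩ := hi
      rw [hh'.extend_apply, ← comp_apply (f := Fin.castSucc),
        ((Fin.castSucc_injective M).comp hh').extend_apply]
    · rw [extend_apply' _ _ _ hi, extend_apply']
      · rfl
      · rintro ⟨k, hk⟩
        exact hi ⟨k, Fin.castSucc_injective M hk⟩

theorem extend_snoc_eq_snoc {h : Fin (M' + 1) → Fin (M + 1)} {h' : Fin M' → Fin M}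
    (hh : Injective h) (hlast : h (Fin.last M') = Fin.last M)
    (hcomp : ∀ k, h k.castSucc = (h' k).castSucc) (j : Fin M' → Fin n) (l : Fin n)
    (b : Fin (M + 1) → Fin n) :
    extend h (Fin.snoc j l) b = Fin.snoc (extend h' j (Fin.init b)) l := by
  have hh' : Injective h' := fun k k' hkk' => Fin.castSucc_injective M' (hh (by simp [hcomp, hkk']))
  funext i
  induction i using Fin.lastCases with
  | last => rw [Fin.snoc_last, ← hlast, hh.extend_apply, Fin.snoc_last]
  | cast i =>
    rw [Fin.snoc_castSucc]
    by_cases hi : ∃ k, h' k = i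
    · obtain ⟨k, rfl⟩ := hi
      rw [hh'.extend_apply, ← hcomp, hh.extend_apply, Fin.snoc_castSucc]
    · rw [extend_apply' _ _ _ hi, extend_apply']
      · rfl
      · rintro ⟨k, hk⟩
        induction k using Fin.lastCases with
        | last => exact Fin.castSucc_ne_last i (hk.symm.trans hlast)
        | cast k => exact hi ⟨k, Fin.castSucc_injective M (by rw [← hcomp, hk])⟩

theorem StrictMono.exists_castSucc {α : Type*} [Preorder α] {h : α → Fin (M + 1)}
    (hh : StrictMono h) (hne : ∀ a, h a ≠ Fin.last M) :
    ∃ h' : α → Fin M, StrictMono h' ∧ ∀ a, h a = (h' a).castSucc :=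
  ⟨fun a => (h a).castPred (hne a), fun _ _ hab => Fin.castPred_lt_castPred_iff.mpr (hh hab),
    fun _ => (Fin.castSucc_castPred _ _).symm⟩

theorem StrictMono.exists_castSucc_of_apply_last {h : Fin (M' + 1) → Fin (M + 1)}
    (hh : StrictMono h) (hlast : h (Fin.last M') = Fin.last M) :
    ∃ h' : Fin M' → Fin M, StrictMono h' ∧ ∀ k, h k.castSucc = (h' k).castSucc :=
  (hh.comp Fin.strictMono_castSucc).exists_castSucc fun k =>
    ((hh (Fin.castSucc_lt_last k)).trans_eq hlast).ne

theorem extend_coe_orderIsoOfFin {α : Type*} {m k : ℕ} (s : Finset (Fin m)) (hs : s.card = k)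
    (j : Fin k → α) (b : Fin m → α) (i : Fin m) :
    extend (fun a => (s.orderIsoOfFin hs a : Fin m)) j b i =
      if hi : i ∈ s then j ((s.orderIsoOfFin hs).symm ⟨i, hi⟩) else b i := by
  have hinj : Injective fun a => (s.orderIsoOfFin hs a : Fin m) :=
    Subtype.val_injective.comp (s.orderIsoOfFin hs).injective
  split_ifs with hi
  · have := hinj.extend_apply j b ((s.orderIsoOfFin hs).symm ⟨i, hi⟩)
    simpa only [OrderIso.apply_symm_apply] using this
  · exact extend_apply' _ _ _ fun ⟨a, ha⟩ => hi (ha ▸ (s.orderIsoOfFin hs a).2)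

/-- Puncturing to the subcube on which every position outside the range of `h` carries the
value of `b` there; the `k`-th coordinate of the subcube sits at position `h k`. -/
noncomputable def puncture (h : Fin m' → Fin m) (b : Fin m → Fin n) :
    ((Fin m → Fin n) → ZMod 2) →+ ((Fin m' → Fin n) → ZMod 2) where
  toFun v j := v (extend h j b)
  map_zero' := rfl
  map_add' _ _ := rfl

theorem puncture_apply (h : Fin m' → Fin m) (b : Fin m → Fin n) (v : (Fin m → Fin n) → ZMod 2)
    (j : Fin m' → Fin n) : puncture h b v j = v (extend h j b) := rfl

theorem puncture_eq_comp_subvec {h : Fin m' → Fin (M + 1)} {h' : Fin m' → Fin M}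
    (hh' : Injective h') (hcomp : ∀ k, h k = (h' k).castSucc) (b : Fin (M + 1) → Fin n) :
    ⇑(puncture h b) = puncture h' (Fin.init b) ∘ (subvec · (b (Fin.last M))) := by
  funext v j
  rw [puncture_apply, extend_eq_snoc_of_forall_castSucc hh' hcomp]
  rfl

theorem subvec_puncture {h : Fin (M' + 1) → Fin (M + 1)} {h' : Fin M' → Fin M}
    (hh : Injective h) (hlast : h (Fin.last M') = Fin.last M)
    (hcomp : ∀ k, h k.castSucc = (h' k).castSucc) (b : Fin (M + 1) → Fin n)
    (v : (Fin (M + 1) → Fin n) → ZMod 2) (l : Fin n) :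
    subvec (puncture h b v) l = puncture h' (Fin.init b) (subvec v l) := by
  funext j
  rw [subvec, puncture_apply, extend_snoc_eq_snoc hh hlast hcomp]
  rfl

theorem image_comp_sum_eq_zero_of_bijective {α β : Type*} [Fintype α] [Fintype β] {σ : β → α}
    (hσ : Bijective σ) :
    (fun v : α → ZMod 2 => v ∘ σ) '' {v | ∑ i, v i = 0} = {t | ∑ j, t j = 0} := by
  ext t
  constructor
  · rintro ⟨v, hv, rfl⟩
    exact (Fintype.sum_bijective σ hσ _ v fun _ => rfl).trans hv
  · intro ht
    refine ⟨t ∘ (Equiv.ofBijective σ hσ).symm, ?_, ?_⟩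
    · exact ((Equiv.ofBijective σ hσ).symm.sum_comp t).trans ht
    · funext j
      simp [Equiv.ofBijective_symm_apply_apply]

theorem image_comp_sum_eq_zero_of_not_surjective {α β : Type*} [Fintype α] [DecidableEq α]
    {σ : β → α} (hi : Injective σ) (hs : ¬ Surjective σ) :
    (fun v : α → ZMod 2 => v ∘ σ) '' {v | ∑ i, v i = 0} = Set.univ := by
  refine Set.eq_univ_of_forall fun t => ?_
  obtain ⟨y, hy⟩ := not_forall.mp hs
  set v := extend σ t 0
  -- fix the parity at a point that the puncturing forgets
  refine ⟨v + Pi.single y (∑ i, v i), ?_, funext fun j => ?_⟩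
  · simp [Finset.sum_add_distrib, CharTwo.add_self_eq_zero]
  · have hj : σ j ≠ y := fun hj => hy ⟨j, hj⟩
    simp [v, hi.extend_apply, hj]

theorem image_puncture_sum_eq_zero (hn : 2 ≤ n) {h : Fin m' → Fin m} (hh : StrictMono h)
    (b : Fin m → Fin n) :
    puncture h b '' {v | ∑ i, v i = 0} = if m ≤ m' then {t | ∑ j, t j = 0} else Set.univ := by
  have hinj := extend_injective hh.injective b
  have hm' := Fin.le_of_injective h hh.injective
  split_ifs with hm
  · refine image_comp_sum_eq_zero_of_bijective
      ((Fintype.bijective_iff_injective_and_card _).mpr ⟨hinj, ?_⟩)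
    simp [le_antisymm hm' hm]
  · refine image_comp_sum_eq_zero_of_not_surjective hinj fun hs => ?_
    have := Fintype.card_le_of_surjective _ hs
    simp only [Fintype.card_fun, Fintype.card_fin] at this
    exact absurd this (not_le.mpr (Nat.pow_lt_pow_right hn (by omega)))

theorem image_puncture_setOf_const (h : Fin m' → Fin m) (b : Fin m → Fin n) :
    puncture h b '' {v | ∃ c, ∀ i, v i = c} = {t | ∃ c, ∀ j, t j = c} := by
  ext t
  constructor
  · rintro ⟨v, ⟨c, hc⟩, rfl⟩
    exact ⟨c, fun j => hc _⟩
  · rintro ⟨c, hc⟩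
    exact ⟨fun _ => c, ⟨c, fun _ => rfl⟩, funext fun j => (hc j).symm⟩

theorem image_puncture_bermanC (hn : 0 < n) :
    ∀ {m m' : ℕ} {h : Fin m' → Fin m}, StrictMono h → ∀ (b : Fin m → Fin n) (r : ℕ),
      puncture h b '' BermanC n m r = BermanC n m' r
  | 0, m', h, hh, b, r => by
    obtain rfl : m' = 0 := Nat.le_zero.mp (Fin.le_of_injective h hh.injective)
    rw [bermanC_of_le r.zero_le]
    exact Set.image_univ_of_surjective
      ((extend_injective hh.injective b).surjective_comp_right (γ := ZMod 2))
  | M + 1, m', h, hh, b, 0 => by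
    simp only [bermanC_zero_eq, image_puncture_setOf_const]
  | M + 1, m', h, hh, b, r + 1 => by
    rw [bermanC_succ_succ hn]
    by_cases hA : ∀ k, h k ≠ Fin.last M
    · obtain ⟨h', hh', hcomp⟩ := hh.exists_castSucc hA
      rw [puncture_eq_comp_subvec hh'.injective hcomp, Set.image_comp,
        ← coe_bermanCAddSubmonoid M (r + 1),
        image_subvec_cStep _ _ (bermanC_mono r.le_succ) (zero_mem_bermanC M r),
        coe_bermanCAddSubmonoid, image_puncture_bermanC hn hh']
    push Not at hA
    obtain ⟨k, hk⟩ := hA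
    obtain ⟨M', rfl⟩ : ∃ M', m' = M' + 1 := ⟨m' - 1, by have := k.isLt; omega⟩
    have hlast : h (Fin.last M') = Fin.last M :=
      le_antisymm (Fin.le_last _) (hk ▸ hh.monotone (Fin.le_last k))
    obtain ⟨h', hh', hcomp⟩ := hh.exists_castSucc_of_apply_last hlast
    rw [image_cStep _ (subvec_puncture hh.injective hlast hcomp b),
      image_puncture_bermanC hn hh', image_puncture_bermanC hn hh', bermanC_succ_succ hn]

theorem image_puncture_bermanD (hn : 2 ≤ n) :
    ∀ {m m' : ℕ} {h : Fin m' → Fin m}, StrictMono h → ∀ (b : Fin m → Fin n) (r : ℕ),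
      puncture h b '' BermanD n m r =
        if m - m' ≤ r then BermanD n m' (r - (m - m')) else Set.univ
  | 0, m', h, hh, b, r => by
    obtain rfl : m' = 0 := Nat.le_zero.mp (Fin.le_of_injective h hh.injective)
    rw [if_pos (Nat.zero_le r), Nat.sub_zero, bermanD_of_le r.zero_le, Set.image_singleton,
      map_zero]
  | M + 1, m', h, hh, b, 0 => by
    simp only [bermanD_zero_eq, image_puncture_sum_eq_zero hn hh, nonpos_iff_eq_zero,
      Nat.sub_eq_zero_iff_le, Nat.zero_sub]
  | M + 1, m', h, hh, b, r + 1 => by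
    rw [bermanD_succ_succ]
    by_cases hA : ∀ k, h k ≠ Fin.last M
    · obtain ⟨h', hh', hcomp⟩ := hh.exists_castSucc hA
      rw [puncture_eq_comp_subvec hh'.injective hcomp, Set.image_comp,
        ← coe_bermanDAddSubmonoid M r, image_subvec_dStep hn _ _ (zero_mem_bermanD M (r + 1)),
        coe_bermanDAddSubmonoid, image_puncture_bermanD hn hh']
      have hm' := Fin.le_of_injective h' hh'.injective
      simp only [show M + 1 - m' = M - m' + 1 by omega, Nat.add_le_add_iff_right,
        Nat.add_sub_add_right]
    push Not at hA
    obtain ⟨k, hk⟩ := hA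
    obtain ⟨M', rfl⟩ : ∃ M', m' = M' + 1 := ⟨m' - 1, by have := k.isLt; omega⟩
    have hlast : h (Fin.last M') = Fin.last M :=
      le_antisymm (Fin.le_last _) (hk ▸ hh.monotone (Fin.le_last k))
    obtain ⟨h', hh', hcomp⟩ := hh.exists_castSucc_of_apply_last hlast
    rw [← coe_bermanDAddSubmonoid M r,
      image_dStep (by omega) _ (subvec_puncture hh.injective hlast hcomp b) _
        (bermanD_anti r.le_succ),
      coe_bermanDAddSubmonoid, image_puncture_bermanD hn hh', image_puncture_bermanD hn hh',
      Nat.add_sub_add_right]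
    rcases lt_trichotomy (M - M') (r + 1) with hlt | heq | hgt
    · rw [if_pos (by omega), if_pos hlt.le, if_pos hlt.le,
        show r + 1 - (M - M') = r - (M - M') + 1 by omega, bermanD_succ_succ]
    · rw [if_neg (by omega), if_pos heq.le, if_pos heq.le, heq, Nat.sub_self,
        dStep_univ_bermanD_zero]
    · rw [if_neg (by omega), if_neg (by omega), if_neg (by omega)]
      exact Set.eq_univ_of_forall fun _ => ⟨fun _ => trivial, trivial⟩

end

theorem berman_puncture_general_general (n m r : ℕ) (hn : 2 ≤ n)
    (K : Finset (Fin m)) (b : {k // k ∈ K} → Fin n)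
    (hcard : Kᶜ.card = m - K.card) :
    (r ≤ m - K.card →
      (fun v : (Fin m → Fin n) → ZMod 2 =>
          fun j : Fin (m - K.card) → Fin n =>
            v (fun k : Fin m =>
              if hk : k ∈ K then b ⟨k, hk⟩
              else j ((Kᶜ.orderIsoOfFin hcard).symm ⟨k, Finset.mem_compl.mpr hk⟩))) ''
        BermanC n m r = BermanC n (m - K.card) r) ∧
    (K.card ≤ r →
      (fun v : (Fin m → Fin n) → ZMod 2 =>
          fun j : Fin (m - K.card) → Fin n =>
            v (fun k : Fin m =>
              if hk : k ∈ K then b ⟨k, hk⟩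
              else j ((Kᶜ.orderIsoOfFin hcard).symm ⟨k, Finset.mem_compl.mpr hk⟩))) ''
        BermanD n m r = BermanD n (m - K.card) (r - K.card)) := by
  have hh : StrictMono fun k => (Kᶜ.orderIsoOfFin hcard k : Fin m) :=
    (Subtype.strictMono_coe _).comp (Kᶜ.orderIsoOfFin hcard).strictMono
  -- `b'` is only ever read at positions in `K`
  let b' : Fin m → Fin n := fun k => if hk : k ∈ K then b ⟨k, hk⟩ else ⟨0, by omega⟩
  have hfill : ∀ (j : Fin (m - K.card) → Fin n) (k : Fin m),
      (if hk : k ∈ K then b ⟨k, hk⟩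
        else j ((Kᶜ.orderIsoOfFin hcard).symm ⟨k, Finset.mem_compl.mpr hk⟩)) =
        Function.extend (fun k => (Kᶜ.orderIsoOfFin hcard k : Fin m)) j b' k := fun j k => by
    rw [extend_coe_orderIsoOfFin]
    by_cases hk : k ∈ K <;> simp [hk, b']
  have hKm : K.card ≤ m := by simpa using K.card_le_univ
  simp only [hfill]
  refine ⟨fun _ => image_puncture_bermanC (by omega) hh b' r,
    fun hKr => (image_puncture_bermanD hn hh b' r).trans ?_⟩
  rw [show m - (m - K.card) = K.card by omega, if_pos hKr]

/-- puncturing to a direct-product subset determined by fixing the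
coordinates in `K` to the values `b` sends `C_n(r,m)` to `C_n(r,m−|K|)` (for
`r ≤ m−|K|`) and `D_n(r,m)` to `D_n(r−|K|,m−|K|)` (for `r ≥ |K|`); the punctured
coordinates are identified with `{0,…,n−1}^{m−|K|}` via the increasing enumeration of
the positions outside `K`. -/
theorem berman_puncture_general (n m r : ℕ) (hn : 2 ≤ n) (hm : 1 ≤ m) (hr : r ≤ m)
    (K : Finset (Fin m)) (hK : K.card ≤ m - 1) (b : {k // k ∈ K} → Fin n)
    (hcard : Kᶜ.card = m - K.card) :
    (r ≤ m - K.card →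
      (fun v : (Fin m → Fin n) → ZMod 2 =>
          fun j : Fin (m - K.card) → Fin n =>
            v (fun k : Fin m =>
              if hk : k ∈ K then b ⟨k, hk⟩
              else j ((Kᶜ.orderIsoOfFin hcard).symm ⟨k, Finset.mem_compl.mpr hk⟩))) ''
        BermanC n m r = BermanC n (m - K.card) r) ∧
    (K.card ≤ r →
      (fun v : (Fin m → Fin n) → ZMod 2 =>
          fun j : Fin (m - K.card) → Fin n =>
            v (fun k : Fin m =>
              if hk : k ∈ K then b ⟨k, hk⟩
              else j ((Kᶜ.orderIsoOfFin hcard).symm ⟨k, Finset.mem_compl.mpr hk⟩))) ''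
        BermanD n m r = BermanD n (m - K.card) (r - K.card)) :=
  berman_puncture_general_general n m r hn K b hcard
end

section
/- Fix an integer n ≥ 2, and set μ = (n−1)/n and σ² = (n−1)/n². There exists a constant κ > 0, depending only on n, such that for every integer k ≥ 1 and all integers 0 ≤ r ≤ m with m ≥ 1: 0 ≤ R_n(r+k,m+k) − R_n(r,m) ≤ 2κ/√m + (k/√m)·(μ+2)/√(8πσ²). Equivalently, the rate 1 − R_n(r,m) of the Berman code D_n(r,m) is at least the rate 1 − R_n(r+k,m+k) of D_n(r+k,m+k), and the difference is O(k/√m). -/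
/-!
Pascal's rule gives `R_n(r+1, m+1) = R_n(r, m) + P(X_m = r+1) / n` with `X_M ~ Bin(M, 1 - 1/n)`,
so the difference telescopes into `k` point masses of binomial laws with at least `m` trials.
A point mass is at most the mass at the mode `a`, and Stirling's bounds
`√(2πj) (j/e)^j ≤ j! ≤ e √j (j/e)^j` together with Gibbs' inequality bound that by
`e/(2π) · √(M / (a (M - a)))`. Since `a ≥ μM` and `M - a ≥ M/n - μ`, this is at most
`(μ+2)/√(8πσ²M)` once `M ≥ 5n`. For `m < 5n` the difference is at most `1 ≤ 2n/√m`,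
so `κ = n` works.
-/

/-- The rate `R_n(r,m)` of the dual Berman code `C_n(r,m)`; `1 − R_n(r,m)` is the rate
of the Berman code `D_n(r,m)`. -/
noncomputable def Rrate (n r m : ℕ) : ℝ :=
  ((∑ w ∈ Finset.range (r + 1), m.choose w * (n - 1) ^ w : ℕ) : ℝ) / (n : ℝ) ^ m

open Finset Real Nat

namespace Berman

theorem sum_range_choose_succ_mul_pow (a m r : ℕ) :
    ∑ w ∈ range (r + 2), (m + 1).choose w * a ^ w
      = (a + 1) * ∑ w ∈ range (r + 1), m.choose w * a ^ w + m.choose (r + 1) * a ^ (r + 1) := by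
  induction r with
  | zero => simp [sum_range_succ, Nat.choose_succ_succ]; ring
  | succ r ih =>
    rw [sum_range_succ, ih, sum_range_succ (fun w => m.choose w * a ^ w) (r + 1),
      Nat.choose_succ_succ m (r + 1)]
    ring

/-- `binomMass n M w = P(X = w)` for `X ~ Bin(M, 1 - 1/n)`. -/
noncomputable def binomMass (n M w : ℕ) : ℝ :=
  ((M.choose w * (n - 1) ^ w : ℕ) : ℝ) / (n : ℝ) ^ M

theorem binomMass_nonneg (n M w : ℕ) : 0 ≤ binomMass n M w := by
  unfold binomMass; positivity

theorem binomMass_succ_add (x a b : ℕ) :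
    binomMass (x + 1) (a + b) a
      = ((a + b).choose a : ℝ) * (x / (x + 1)) ^ a * (1 / (x + 1)) ^ b := by
  simp only [binomMass, Nat.add_sub_cancel, pow_add]
  push_cast
  rw [div_pow, div_pow]
  field_simp
  simp

theorem Rrate_succ_succ {n : ℕ} (hn : 0 < n) (r m : ℕ) :
    Rrate n (r + 1) (m + 1) = Rrate n r m + binomMass n m (r + 1) / n := by
  have h := sum_range_choose_succ_mul_pow (n - 1) m r
  rw [Nat.sub_add_cancel hn] at h
  have : (n : ℝ) ≠ 0 := by positivity
  rw [Rrate, Rrate, binomMass, h]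
  push_cast
  field_simp
  ring

theorem Rrate_add_add_sub {n : ℕ} (hn : 0 < n) (k r m : ℕ) :
    Rrate n (r + k) (m + k) - Rrate n r m
      = ∑ i ∈ range k, binomMass n (m + i) (r + i + 1) / n := by
  have htele := sum_range_sub (fun i => Rrate n (r + i) (m + i)) k
  simp only [add_zero] at htele
  rw [← htele]
  refine sum_congr rfl fun i _ => ?_
  rw [← add_assoc, ← add_assoc, Rrate_succ_succ hn]
  ring

theorem Rrate_le_one {n r m : ℕ} (hn : 0 < n) (h : r ≤ m) : Rrate n r m ≤ 1 := by
  have hsum : ∑ w ∈ range (r + 1), m.choose w * (n - 1) ^ w ≤ n ^ m :=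
    calc ∑ w ∈ range (r + 1), m.choose w * (n - 1) ^ w
        ≤ ∑ w ∈ range (m + 1), m.choose w * (n - 1) ^ w :=
          sum_le_sum_of_subset (range_subset_range.mpr (by omega))
      _ = n ^ m := by rw [← Nat.sub_add_cancel hn, add_pow]; simp [mul_comm]
  rw [Rrate, div_le_one (by positivity)]
  exact_mod_cast hsum

theorem Rrate_nonneg (n r m : ℕ) : 0 ≤ Rrate n r m := by
  unfold Rrate; positivity

theorem Rrate_add_add_sub_nonneg {n : ℕ} (hn : 0 < n) (k r m : ℕ) :
    0 ≤ Rrate n (r + k) (m + k) - Rrate n r m := by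
  rw [Rrate_add_add_sub hn]
  exact sum_nonneg fun i _ => div_nonneg (binomMass_nonneg _ _ _) (Nat.cast_nonneg n)

theorem Rrate_add_add_sub_le_two_mul_div_sqrt {n r m : ℕ} (hn : 0 < n) (hrm : r ≤ m)
    (hm : 0 < m) (hmn : m ≤ 4 * n ^ 2) (k : ℕ) :
    Rrate n (r + k) (m + k) - Rrate n r m ≤ 2 * n / √m := by
  have hsqrt : √(m : ℝ) ≤ 2 * n := by
    rw [Real.sqrt_le_left (by positivity)]
    exact_mod_cast (show m ≤ (2 * n) ^ 2 by rw [mul_pow]; omega)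
  calc Rrate n (r + k) (m + k) - Rrate n r m ≤ 1 := by
        linarith [Rrate_le_one hn (Nat.add_le_add_right hrm k), Rrate_nonneg n r m]
    _ ≤ 2 * n / √m := by rw [le_div_iff₀ (by positivity)]; linarith

theorem apply_le_apply_of_unimodal {α : Type*} [Preorder α] {f : ℕ → α} {a : ℕ}
    (hup : ∀ w < a, f w ≤ f (w + 1)) (hdown : ∀ w ≥ a, f (w + 1) ≤ f w) (w : ℕ) :
    f w ≤ f a := by
  rcases le_total w a with h | h
  · have hmono : Monotone fun v => f (min v a) := monotone_nat_of_le_succ fun v => by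
      rcases lt_or_ge v a with hv | hv
      · simpa [min_eq_left hv.le, min_eq_left (Nat.succ_le_of_lt hv)] using hup v hv
      · simp [min_eq_right hv, min_eq_right (hv.trans (Nat.le_succ v))]
    simpa [min_eq_left h] using hmono h
  · exact Nat.rel_of_forall_rel_succ_of_le_of_le (· ≥ ·) hdown le_rfl h

theorem choose_mul_pow_le_of_mode {M x a : ℕ} (h1 : M * x ≤ (x + 1) * a)
    (h2 : (x + 1) * a ≤ (M + 1) * x) (w : ℕ) :
    M.choose w * x ^ w ≤ M.choose a * x ^ a := by
  set t : ℕ → ℕ := fun w => M.choose w * x ^ w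
  have hratio : ∀ w, t (w + 1) * (w + 1) = t w * ((M - w) * x) := fun w => by
    simp only [t]
    rw [pow_succ, mul_right_comm, Nat.choose_succ_right_eq]
    ring
  have haM : a ≤ M := by nlinarith
  refine apply_le_apply_of_unimodal (f := t) (fun w hw => ?_) (fun w hw => ?_) w
  · obtain ⟨d, hd⟩ := Nat.exists_eq_add_of_le (show w + 1 ≤ M by omega)
    have hstep : w + 1 ≤ (M - w) * x := by
      rw [show M - w = d + 1 by omega]; nlinarith
    refine Nat.le_of_mul_le_mul_right ?_ w.succ_pos
    rw [hratio]; exact Nat.mul_le_mul_left _ hstep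
  · have hstep : (M - w) * x ≤ w + 1 := by
      rcases le_total M w with hM | hM
      · simp [Nat.sub_eq_zero_of_le hM]
      · obtain ⟨d, hd⟩ := Nat.exists_eq_add_of_le hM
        rw [show M - w = d by omega]; nlinarith
    refine Nat.le_of_mul_le_mul_right ?_ w.succ_pos
    rw [hratio]; exact Nat.mul_le_mul_left _ hstep

theorem factorial_le_exp_one_mul_sqrt {j : ℕ} (hj : j ≠ 0) :
    (j ! : ℝ) ≤ exp 1 * √j * (j / exp 1) ^ j := by
  obtain ⟨i, rfl⟩ := Nat.exists_eq_succ_of_ne_zero hj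
  have hseq : Stirling.stirlingSeq (i + 1) ≤ exp 1 / √2 := by
    simpa [Stirling.stirlingSeq_one] using Stirling.stirlingSeq'_antitone (Nat.zero_le i)
  have hpos : (0 : ℝ) < √(2 * (i + 1 : ℕ)) * ((i + 1 : ℕ) / exp 1) ^ (i + 1) := by
    positivity
  rw [Stirling.stirlingSeq, div_le_iff₀ hpos] at hseq
  refine hseq.trans (le_of_eq ?_)
  rw [Real.sqrt_mul zero_le_two]
  field_simp

theorem pow_mul_pow_le_one {x y : ℝ} (hx : 0 ≤ x) (hy : 0 ≤ y) {a b : ℕ}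
    (h : a * (x - 1) + b * (y - 1) ≤ 0) : x ^ a * y ^ b ≤ 1 :=
  calc x ^ a * y ^ b ≤ exp (x - 1) ^ a * exp (y - 1) ^ b := by
        gcongr <;> linarith [add_one_le_exp (x - 1), add_one_le_exp (y - 1)]
    _ = exp (a * (x - 1) + b * (y - 1)) := by rw [← exp_nat_mul, ← exp_nat_mul, ← exp_add]
    _ ≤ 1 := exp_le_one_iff.mpr h

theorem choose_mul_pow_mul_pow_le {a b : ℕ} (ha : a ≠ 0) (hb : b ≠ 0) {p q : ℝ}
    (hp : 0 < p) (hq : 0 < q) (hpq : p + q = 1) :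
    ((a + b).choose a : ℝ) * p ^ a * q ^ b ≤ exp 1 / (2 * π) * √((a + b) / (a * b)) := by
  set N : ℝ := a + b
  have hA : (0 : ℝ) < a := by positivity
  have hB : (0 : ℝ) < b := by positivity
  have hN : 0 < N := by positivity
  have hgibbs : (N * p / a) ^ a * (N * q / b) ^ b ≤ 1 := by
    refine pow_mul_pow_le_one (by positivity) (by positivity) (le_of_eq ?_)
    field_simp
    linear_combination N * hpq
  have hchoose : ((a + b).choose a : ℝ)
      ≤ exp 1 * √N * (N / exp 1) ^ (a + b)
        / (√(2 * π * a) * (a / exp 1) ^ a * (√(2 * π * b) * (b / exp 1) ^ b)) := by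
    rw [Nat.cast_choose ℝ (Nat.le_add_right a b), Nat.add_sub_cancel_left]
    have hstirling := factorial_le_exp_one_mul_sqrt (j := a + b) (by omega)
    push_cast at hstirling
    gcongr
    · exact Stirling.le_factorial_stirling a
    · exact Stirling.le_factorial_stirling b
  calc ((a + b).choose a : ℝ) * p ^ a * q ^ b
      ≤ exp 1 * √N * (N / exp 1) ^ (a + b)
        / (√(2 * π * a) * (a / exp 1) ^ a * (√(2 * π * b) * (b / exp 1) ^ b))
        * p ^ a * q ^ b := by
        gcongr
    _ = exp 1 / (2 * π) * √(N / (a * b)) * ((N * p / a) ^ a * (N * q / b) ^ b) := by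
        rw [Real.sqrt_mul' _ hA.le, Real.sqrt_mul' _ hB.le, Real.sqrt_div' _ (by positivity),
          Real.sqrt_mul hA.le]
        have h2pi : √(2 * π) ^ 2 = 2 * π := Real.sq_sqrt (by positivity)
        simp only [div_pow, mul_pow]
        field_simp
        rw [h2pi]
        ring
    _ ≤ exp 1 / (2 * π) * √(N / (a * b)) := mul_le_of_le_one_right (by positivity) hgibbs

theorem two_mul_exp_one_sq_le : 2 * exp 1 ^ 2 ≤ 5 * π := by
  nlinarith [exp_one_lt_d9, pi_gt_d2, exp_pos 1]

theorem exp_one_div_two_pi_mul_sqrt_le {p s N A B : ℝ} (hp : 1 / 2 ≤ p) (hs : 0 < s)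
    (hN : 0 < N) (hAB : 4 / 5 * (s * N ^ 2) ≤ A * B) :
    exp 1 / (2 * π) * √(N / (A * B)) ≤ (p + 2) / √(8 * π * s) / √N := by
  have hAB0 : 0 < A * B := lt_of_lt_of_le (by positivity) hAB
  rw [← pow_le_pow_iff_left₀ (by positivity) (by positivity) two_ne_zero]
  simp only [div_pow, mul_pow]
  rw [Real.sq_sqrt (by positivity), Real.sq_sqrt (by positivity), Real.sq_sqrt hN.le,
    div_div]
  field_simp
  rw [div_le_iff₀ hAB0]
  have hp2 : 25 / 4 ≤ (p + 2) ^ 2 := by nlinarith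
  calc exp 1 ^ 2 * N ^ 2 * 8 * s = 4 * (2 * exp 1 ^ 2) * (s * N ^ 2) := by ring
    _ ≤ 4 * (5 * π) * (s * N ^ 2) := by gcongr 4 * ?_ * _; exact two_mul_exp_one_sq_le
    _ = 2 ^ 2 * π * (25 / 4) * (4 / 5 * (s * N ^ 2)) := by ring
    _ ≤ 2 ^ 2 * π * (p + 2) ^ 2 * (A * B) := by gcongr

theorem le_mul_sub_of_mode {x M A : ℝ} (hx : 0 ≤ x) (hM : 5 * (x + 1) ≤ M)
    (h1 : M * x ≤ (x + 1) * A) (h2 : (x + 1) * A ≤ (M + 1) * x) :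
    4 / 5 * (x / (x + 1) ^ 2 * M ^ 2) ≤ A * (M - A) := by
  have hB : M - x ≤ (x + 1) * (M - A) := by linarith
  have key : 4 / 5 * (x * M ^ 2) ≤ ((x + 1) * A) * ((x + 1) * (M - A)) := by
    nlinarith [mul_le_mul h1 hB (by linarith) (by nlinarith),
      mul_nonneg (mul_nonneg hx (by linarith : 0 ≤ M)) (by linarith : 0 ≤ M - 5 * x)]
  calc 4 / 5 * (x / (x + 1) ^ 2 * M ^ 2) = 4 / 5 * (x * M ^ 2) / (x + 1) ^ 2 := by ring
    _ ≤ ((x + 1) * A) * ((x + 1) * (M - A)) / (x + 1) ^ 2 := by gcongr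
    _ = A * (M - A) := by field_simp

theorem binomMass_le {n M : ℕ} (hn : 2 ≤ n) (hM : 5 * n ≤ M) (w : ℕ) :
    binomMass n M w
      ≤ (((n : ℝ) - 1) / n + 2) / √(8 * π * (((n : ℝ) - 1) / n ^ 2)) / √M := by
  obtain ⟨x, rfl⟩ : ∃ x, n = x + 1 := ⟨n - 1, by omega⟩
  set a := (M + 1) * x / (x + 1)
  have h2 : (x + 1) * a ≤ (M + 1) * x := Nat.mul_div_le _ _
  have h1 : M * x ≤ (x + 1) * a := by
    have : (M + 1) * x < (x + 1) * (a + 1) := Nat.lt_mul_div_succ _ x.succ_pos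
    nlinarith
  obtain ⟨b, hab⟩ : ∃ b, M = a + b := Nat.exists_eq_add_of_le (by nlinarith)
  have ha : a ≠ 0 := by rintro h; rw [h] at h1; nlinarith
  have hb : b ≠ 0 := by rintro h; rw [h] at hab; nlinarith
  have hmode : binomMass (x + 1) M w ≤ binomMass (x + 1) M a := by
    simp only [binomMass, Nat.add_sub_cancel]
    gcongr ?_ / _
    exact_mod_cast choose_mul_pow_le_of_mode h1 h2 w
  have hx : (1 : ℝ) ≤ x := by norm_cast; omega
  have hx0 : (0 : ℝ) < x := by linarith
  have hM0 : (0 : ℝ) < M := by exact_mod_cast (show 0 < M by omega)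
  have hAB : 4 / 5 * (x / (x + 1) ^ 2 * (M : ℝ) ^ 2) ≤ a * b := by
    have hb' : (b : ℝ) = M - a := by rw [hab]; push_cast; ring
    rw [hb']
    exact le_mul_sub_of_mode hx0.le (by exact_mod_cast hM) (by exact_mod_cast h1)
      (by exact_mod_cast h2)
  push_cast
  rw [add_sub_cancel_right]
  calc binomMass (x + 1) M w ≤ binomMass (x + 1) M a := hmode
    _ = ((a + b).choose a : ℝ) * (x / (x + 1)) ^ a * (1 / (x + 1)) ^ b := by
      rw [hab, binomMass_succ_add]
    _ ≤ exp 1 / (2 * π) * √((a + b) / (a * b)) :=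
      choose_mul_pow_mul_pow_le ha hb (by positivity) (by positivity) (by field_simp)
    _ ≤ _ := by
      rw [← Nat.cast_add, ← hab]
      refine exp_one_div_two_pi_mul_sqrt_le ?_ (by positivity) hM0 hAB
      rw [le_div_iff₀ (by positivity)]
      linarith

theorem sub_one_div_add_two_div_sqrt_nonneg {n : ℕ} (hn : 1 ≤ n) :
    0 ≤ (((n : ℝ) - 1) / n + 2) / √(8 * π * (((n : ℝ) - 1) / n ^ 2)) := by
  have : (0 : ℝ) ≤ ((n : ℝ) - 1) / n :=
    div_nonneg (by linarith [(Nat.one_le_cast (α := ℝ)).mpr hn]) (Nat.cast_nonneg n)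
  positivity

theorem Rrate_add_add_sub_le_mul_div_sqrt {n m : ℕ} (hn : 2 ≤ n) (hm : 5 * n ≤ m)
    (k r : ℕ) :
    Rrate n (r + k) (m + k) - Rrate n r m
      ≤ k / √m * ((((n : ℝ) - 1) / n + 2) / √(8 * π * (((n : ℝ) - 1) / n ^ 2))) := by
  set c := (((n : ℝ) - 1) / n + 2) / √(8 * π * (((n : ℝ) - 1) / n ^ 2))
  have hc : 0 ≤ c := sub_one_div_add_two_div_sqrt_nonneg (by omega)
  have hterm (i : ℕ) : binomMass n (m + i) (r + i + 1) / n ≤ c / √m :=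
    calc binomMass n (m + i) (r + i + 1) / n ≤ binomMass n (m + i) (r + i + 1) :=
          div_le_self (binomMass_nonneg _ _ _) (by exact_mod_cast (by omega : 1 ≤ n))
      _ ≤ c / √(m + i : ℕ) := binomMass_le hn (by omega) _
      _ ≤ c / √m := by
        refine div_le_div_of_nonneg_left hc (Real.sqrt_pos.mpr ?_) (Real.sqrt_le_sqrt ?_)
        · exact_mod_cast (by omega : 0 < m)
        · exact_mod_cast Nat.le_add_right m i
  calc Rrate n (r + k) (m + k) - Rrate n r m ≤ ∑ _i ∈ range k, c / √m := by
        rw [Rrate_add_add_sub (by omega)]; exact sum_le_sum fun i _ => hterm i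
    _ = k / √m * c := by rw [sum_const, card_range, nsmul_eq_mul]; ring

end Berman

open Berman in
/-- the rate of `D_n(r,m)` is at least the rate of `D_n(r+k,m+k)`, and
the difference `R_n(r+k,m+k) − R_n(r,m)` is at most
`2κ/√m + (k/√m)(μ+2)/√(8πσ²)` where `μ = (n−1)/n` and `σ² = (n−1)/n²`. -/
theorem berman_rate_change_D (n : ℕ) (hn : 2 ≤ n) :
    ∃ κ : ℝ, 0 < κ ∧ ∀ k m r : ℕ, 1 ≤ k → 1 ≤ m → r ≤ m →
      0 ≤ Rrate n (r + k) (m + k) - Rrate n r m ∧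
      Rrate n (r + k) (m + k) - Rrate n r m ≤
        2 * κ / Real.sqrt m +
          ((k : ℝ) / Real.sqrt m) *
            ((((n : ℝ) - 1) / (n : ℝ) + 2) /
              Real.sqrt (8 * Real.pi * (((n : ℝ) - 1) / (n : ℝ) ^ 2))) := by
  refine ⟨n, by positivity, fun k m r _ hm hrm =>
    ⟨Rrate_add_add_sub_nonneg (by omega) k r m, ?_⟩⟩
  rcases lt_or_ge m (5 * n) with hsmall | hlarge
  · have := Rrate_add_add_sub_le_two_mul_div_sqrt (n := n) (by omega) hrm hm (by nlinarith) k
    have : 0 ≤ (k : ℝ) / √m * _ :=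
      mul_nonneg (by positivity) (sub_one_div_add_two_div_sqrt_nonneg (n := n) (by omega))
    linarith
  · have := Rrate_add_add_sub_le_mul_div_sqrt hn hlarge k r
    have : 0 ≤ 2 * (n : ℝ) / √m := by positivity
    linarith
end

section
/- For every integer n ≥ 2 and every real R* ∈ (0,1), there exist sequences of integers (m_l) and (r_l) with m_l → ∞ and 0 ≤ r_l ≤ m_l for all l, such that R_n(r_l, m_l) → R* as l → ∞. That is, for every rate R* ∈ (0,1) there is a sequence of dual Berman codes of strictly increasing block length whose rates converge to R*. -/
set_option maxHeartbeats 1000000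

open Finset

noncomputable def tau (n m w : ℕ) : ℝ :=
  ((m.choose w * (n - 1) ^ w : ℕ) : ℝ) / (n : ℝ) ^ m

lemma tau_nonneg (n m w : ℕ) : 0 ≤ tau n m w := by
  unfold tau; positivity

lemma sum_choose_pow (n m : ℕ) (hn : 2 ≤ n) :
    ∑ w ∈ range (m + 1), m.choose w * (n - 1) ^ w = n ^ m := by
  have h := add_pow (n - 1) 1 m
  have hn1 : n - 1 + 1 = n := by omega
  rw [hn1] at h
  rw [h]
  apply Finset.sum_congr rfl
  intro w _
  simp [mul_comm]

lemma sum_tau (n m : ℕ) (hn : 2 ≤ n) :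
    ∑ w ∈ range (m + 1), tau n m w = 1 := by
  unfold tau
  rw [← Finset.sum_div]
  rw [← Nat.cast_sum]
  rw [sum_choose_pow n m hn]
  have : (0:ℝ) < (n:ℝ) ^ m := by positivity
  push_cast
  field_simp

lemma tau_succ (n m v : ℕ) (hn : 2 ≤ n) (hv : v ≤ m) :
    tau n m (v + 1) * (v + 1) = tau n m v * (((n:ℝ) - 1) * ((m:ℝ) - v)) := by
  have h := Nat.choose_succ_right_eq m v
  have hcast : ((m.choose (v+1) * (v+1) : ℕ) : ℝ) = ((m.choose v * (m - v) : ℕ) : ℝ) := by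
    exact_mod_cast congrArg (Nat.cast : ℕ → ℝ) h
  have hmv : ((m - v : ℕ) : ℝ) = (m:ℝ) - v := by
    exact Nat.cast_sub hv
  have hn1 : (((n-1 : ℕ)) : ℝ) = (n:ℝ) - 1 := by
    have h1 : 1 ≤ n := by omega
    rw [Nat.cast_sub h1]; norm_num
  push_cast [hmv, hn1] at hcast ⊢
  have hpow : ((n:ℝ) - 1) ^ (v+1) = ((n:ℝ)-1)^v * ((n:ℝ)-1) := by ring
  unfold tau
  push_cast [hn1]
  rw [hpow]
  have hnm : ((n:ℝ)) ^ m ≠ 0 := by positivity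
  field_simp
  linear_combination (((n:ℝ) - 1) ^ v * ((n:ℝ) - 1)) * hcast

lemma step_right (n m v : ℕ) (hn : 2 ≤ n) (hv : v ≤ m) (δ : ℝ)
    (hcond : (1 - δ) * ((v:ℝ) + 1) ≤ ((n:ℝ) - 1) * ((m:ℝ) - (v:ℝ))) :
    (1 - δ) * tau n m v ≤ tau n m (v + 1) := by
  have h1 := tau_succ n m v hn hv
  have h0 := tau_nonneg n m v
  have h2 : tau n m v * ((1 - δ) * ((v:ℝ) + 1)) ≤ tau n m v * (((n:ℝ) - 1) * ((m:ℝ) - v)) :=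
    mul_le_mul_of_nonneg_left hcond h0
  have hp : (0:ℝ) < (v:ℝ) + 1 := by positivity
  nlinarith [h1, h2, hp]

lemma step_left (n m v : ℕ) (hn : 2 ≤ n) (hv : v ≤ m) (δ : ℝ) (hδ : 0 ≤ δ)
    (hcond : ((n:ℝ) - 1) * ((m:ℝ) - (v:ℝ)) ≤ (1 + δ) * ((v:ℝ) + 1)) :
    tau n m (v + 1) ≤ (1 + δ) * tau n m v := by
  have h1 := tau_succ n m v hn hv
  have h0 := tau_nonneg n m v
  have h2 : tau n m v * (((n:ℝ) - 1) * ((m:ℝ) - v)) ≤ tau n m v * ((1 + δ) * ((v:ℝ) + 1)) :=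
    mul_le_mul_of_nonneg_left hcond h0
  have hp : (0:ℝ) < (v:ℝ) + 1 := by positivity
  nlinarith [h1, h2, hp]

lemma chain_right (n m w K : ℕ) (δ : ℝ) (hδ1 : δ ≤ 1)
    (hsteps : ∀ k < K, (1 - δ) * tau n m (w + k) ≤ tau n m (w + k + 1)) :
    ∀ k ≤ K, (1 - δ) ^ k * tau n m w ≤ tau n m (w + k) := by
  intro k hk
  induction k with
  | zero => simp
  | succ k ih =>
    have hkK : k < K := by omega
    have h1 := ih (by omega)
    have h2 := hsteps k hkK
    have h3 : (1 - δ) * ((1 - δ) ^ k * tau n m w) ≤ (1 - δ) * tau n m (w + k) :=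
      mul_le_mul_of_nonneg_left h1 (by linarith)
    calc (1 - δ) ^ (k+1) * tau n m w = (1 - δ) * ((1 - δ) ^ k * tau n m w) := by ring
    _ ≤ (1 - δ) * tau n m (w + k) := h3
    _ ≤ tau n m (w + k + 1) := h2

lemma chain_left (n m w K : ℕ) (δ : ℝ) (hδ : 0 ≤ δ) (hKw : K ≤ w)
    (hsteps : ∀ k < K, tau n m (w - k) ≤ (1 + δ) * tau n m (w - (k + 1))) :
    ∀ k ≤ K, tau n m w ≤ (1 + δ) ^ k * tau n m (w - k) := by
  intro k hk
  induction k with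
  | zero => simp
  | succ k ih =>
    have hkK : k < K := by omega
    have h1 := ih (by omega)
    have h2 := hsteps k hkK
    have h3 : (1 + δ) ^ k * tau n m (w - k) ≤ (1 + δ) ^ k * ((1 + δ) * tau n m (w - (k + 1))) :=
      mul_le_mul_of_nonneg_left h2 (by positivity)
    calc tau n m w ≤ (1 + δ) ^ k * tau n m (w - k) := h1
    _ ≤ (1 + δ) ^ k * ((1 + δ) * tau n m (w - (k+1))) := h3
    _ = (1 + δ) ^ (k+1) * tau n m (w - (k+1)) := by ring

lemma tau_le_one (n m w : ℕ) (hn : 2 ≤ n) : tau n m w ≤ 1 := by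
  rcases le_or_gt w m with h | h
  · calc tau n m w ≤ ∑ v ∈ range (m+1), tau n m v :=
        Finset.single_le_sum (fun v _ => tau_nonneg n m v)
          (by simp only [Finset.mem_range]; omega)
    _ = 1 := sum_tau n m hn
  · unfold tau; rw [Nat.choose_eq_zero_of_lt h]; simp

lemma tau_small (n : ℕ) (hn : 2 ≤ n) (ε : ℝ) (hε : 0 < ε) :
    ∀ᶠ m in Filter.atTop, ∀ w, tau n m w < ε := by
  rcases le_or_gt ε 1 with hε1 | hε1
  swap
  · filter_upwards with m
    intro w
    exact lt_of_le_of_lt (tau_le_one n m w hn) hε1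
  have hnr : (2:ℝ) ≤ (n:ℝ) := by exact_mod_cast hn
  have hn1 : (1:ℝ) ≤ (n:ℝ) - 1 := by linarith
  obtain ⟨K, hK1, hKε⟩ : ∃ K : ℕ, 1 ≤ K ∧ (4:ℝ) ≤ (K:ℝ) * ε := by
    refine ⟨⌈(4:ℝ)/ε⌉₊ + 1, by omega, ?_⟩
    have h1 : (4:ℝ)/ε ≤ (⌈(4:ℝ)/ε⌉₊ : ℝ) := Nat.le_ceil _
    have h2 : (4:ℝ)/ε ≤ ((⌈(4:ℝ)/ε⌉₊ + 1 : ℕ) : ℝ) := by push_cast; linarith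
    calc (4:ℝ) = (4/ε) * ε := by field_simp
    _ ≤ _ := mul_le_mul_of_nonneg_right h2 hε.le
  have hKr1 : (1:ℝ) ≤ (K:ℝ) := by exact_mod_cast hK1
  obtain ⟨δ, hδpos, hδhalf, hδK⟩ : ∃ δ : ℝ, 0 < δ ∧ δ ≤ 1/2 ∧ δ * (2*(K:ℝ)) = 1 := by
    refine ⟨1 / (2*(K:ℝ)), by positivity, ?_, by field_simp⟩
    rw [div_le_div_iff₀ (by positivity) (by norm_num)]
    linarith
  have hpowK : (1:ℝ)/2 ≤ (1 - δ)^K := by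
    have h := one_add_mul_le_pow (a := -δ) (by linarith) K
    have he : 1 + (K:ℝ) * (-δ) = 1/2 := by nlinarith [hδK]
    rw [he] at h
    calc (1:ℝ)/2 ≤ (1 + -δ)^K := h
    _ = (1 - δ)^K := by ring_nf
  have hpowK' : (1 + δ)^K ≤ 2 := by
    have ha : (1-δ)^K * (1+δ)^K = (1 - δ^2)^K := by
      rw [← mul_pow]; ring_nf
    have hb : (1 - δ^2)^K ≤ 1 := by
      apply pow_le_one₀ <;> nlinarith
    nlinarith [pow_nonneg (by linarith : (0:ℝ) ≤ 1 + δ) K,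
      pow_nonneg (by linarith : (0:ℝ) ≤ 1 - δ) K]
  rw [Filter.eventually_atTop]
  refine ⟨4*K^2*n + 2*K + n + 2, fun m hm => ?_⟩
  intro w
  by_contra hcon
  push_neg at hcon
  have hwm : w ≤ m := by
    by_contra h
    push_neg at h
    have : tau n m w = 0 := by
      unfold tau; rw [Nat.choose_eq_zero_of_lt h]; simp
    rw [this] at hcon; linarith
  have hmr : ((4*K^2*n + 2*K : ℕ):ℝ) ≤ (m:ℝ) := by
    have : 4*K^2*n + 2*K ≤ m := by omega
    exact_mod_cast this
  push_cast at hmr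
  -- the contradiction gadget
  have gadget : ∀ a : ℕ, a + K ≤ m → (∀ v ∈ Finset.Icc a (a+K), ε/2 ≤ tau n m v) → False := by
    intro a ha hv
    have hsub : Finset.Icc a (a+K) ⊆ Finset.range (m+1) := by
      intro v hv'
      simp only [Finset.mem_Icc] at hv'
      simp only [Finset.mem_range]
      omega
    have hsum1 : ∑ v ∈ Finset.Icc a (a+K), tau n m v ≤ 1 := by
      rw [← sum_tau n m hn]
      exact Finset.sum_le_sum_of_subset_of_nonneg hsub (fun i _ _ => tau_nonneg n m i)
    have hcard : (Finset.Icc a (a+K)).card = K + 1 := by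
      rw [Nat.card_Icc]; omega
    have hsum2 := Finset.card_nsmul_le_sum (Finset.Icc a (a+K)) (tau n m) (ε/2) hv
    rw [hcard, nsmul_eq_mul] at hsum2
    push_cast at hsum2
    nlinarith [hsum1, hsum2, hKε]
  by_cases hcase : (1 - δ) * ((w:ℝ) + (K:ℝ)) ≤ ((n:ℝ) - 1) * ((m:ℝ) - ((w:ℝ) + (K:ℝ) - 1))
  · -- right window
    have hwK : w + K ≤ m := by
      have hpos : (0:ℝ) < (m:ℝ) - ((w:ℝ) + (K:ℝ) - 1) := by
        nlinarith [show (0:ℝ) ≤ (w:ℝ) by positivity]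
      have h2 : (w:ℝ) + (K:ℝ) < (m:ℝ) + 1 := by linarith
      have h3 : ((w + K : ℕ):ℝ) < ((m + 1 : ℕ):ℝ) := by push_cast; linarith
      have := Nat.cast_lt.mp h3
      omega
    have hsteps : ∀ k < K, (1 - δ) * tau n m (w + k) ≤ tau n m (w + k + 1) := by
      intro k hk
      apply step_right n m (w+k) hn (by omega) δ
      have hk' : (k:ℝ) + 1 ≤ (K:ℝ) := by exact_mod_cast hk
      push_cast
      nlinarith [hcase, mul_nonneg (show (0:ℝ) ≤ 1-δ by linarith)
        (show (0:ℝ) ≤ (K:ℝ) - ((k:ℝ)+1) by linarith),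
        mul_nonneg (show (0:ℝ) ≤ (n:ℝ)-1 by linarith)
        (show (0:ℝ) ≤ (K:ℝ) - 1 - (k:ℝ) by linarith)]
    have hchain := chain_right n m w K δ (by linarith) hsteps
    apply gadget w hwK
    intro v hv'
    simp only [Finset.mem_Icc] at hv'
    obtain ⟨h1, h2⟩ := hv'
    have hveq : v = w + (v - w) := by omega
    rw [hveq]
    set k := v - w with hkdef
    have hkK : k ≤ K := by omega
    have hc := hchain k hkK
    have hmono : (1-δ)^K ≤ (1-δ)^k := pow_le_pow_of_le_one (by linarith) (by linarith) hkK
    calc ε/2 = (1/2) * ε := by ring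
    _ ≤ (1-δ)^K * ε := mul_le_mul_of_nonneg_right hpowK hε.le
    _ ≤ (1-δ)^k * ε := mul_le_mul_of_nonneg_right hmono hε.le
    _ ≤ (1-δ)^k * tau n m w := mul_le_mul_of_nonneg_left hcon (pow_nonneg (by linarith) k)
    _ ≤ tau n m (w + k) := hc
  · -- left window
    push_neg at hcase
    have hwlow : 2*(n:ℝ)*(K:ℝ)^2 ≤ (w:ℝ) := by
      nlinarith [hcase, mul_nonneg hδpos.le (show (0:ℝ) ≤ (w:ℝ)+(K:ℝ) by positivity),
        mul_nonneg (show (0:ℝ) ≤ (n:ℝ)-2 by linarith) (show (0:ℝ) ≤ (m:ℝ) by positivity),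
        mul_nonneg (mul_nonneg (show (0:ℝ) ≤ (n:ℝ)-2 by linarith)
          (show (0:ℝ) ≤ (K:ℝ) by positivity)) (show (0:ℝ) ≤ (K:ℝ) by positivity)]
    have hKw : K + 1 ≤ w := by
      have : ((K:ℕ):ℝ) + 1 ≤ (w:ℝ) := by nlinarith
      have h3 : ((K + 1 : ℕ):ℝ) ≤ ((w : ℕ):ℝ) := by push_cast; linarith
      exact_mod_cast h3
    have hkey : ((n:ℝ)-1) * ((m:ℝ) - ((w:ℝ) - (K:ℝ))) ≤ (1+δ) * ((w:ℝ) - (K:ℝ) + 1) := by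
      have hδw : 2*(n:ℝ)*(K:ℝ) ≤ δ * (2*(w:ℝ)) := by
        have h1 : δ * (2*((n:ℝ)*(K:ℝ)^2)) ≤ δ * (w:ℝ) := by
          apply mul_le_mul_of_nonneg_left _ hδpos.le
          nlinarith
        nlinarith [hδK]
      nlinarith [hcase, hδw, mul_nonneg hδpos.le (show (0:ℝ) ≤ (K:ℝ) by positivity)]
    have hsteps : ∀ k < K, tau n m (w - k) ≤ (1 + δ) * tau n m (w - (k + 1)) := by
      intro k hk
      have hsub1 : w - (k+1) + 1 = w - k := by omega
      have hcast : ((w - (k+1) : ℕ):ℝ) = (w:ℝ) - ((k:ℝ)+1) := by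
        rw [Nat.cast_sub (by omega)]; push_cast; ring
      have hcond : ((n:ℝ) - 1) * ((m:ℝ) - ((w - (k+1) : ℕ):ℝ)) ≤ (1 + δ) * (((w - (k+1) : ℕ):ℝ) + 1) := by
        rw [hcast]
        have hk' : (k:ℝ) + 1 ≤ (K:ℝ) := by exact_mod_cast hk
        nlinarith [hkey, mul_nonneg (show (0:ℝ) ≤ (n:ℝ)-1 by linarith)
          (show (0:ℝ) ≤ (K:ℝ) - ((k:ℝ)+1) by linarith),
          mul_nonneg (show (0:ℝ) ≤ 1+δ by linarith)
          (show (0:ℝ) ≤ (K:ℝ) - ((k:ℝ)+1) by linarith)]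
      have := step_left n m (w - (k+1)) hn (by omega) δ hδpos.le hcond
      rw [hsub1] at this
      exact this
    have hchain := chain_left n m w K δ hδpos.le (by omega) hsteps
    apply gadget (w - K) (by omega)
    intro v hv'
    simp only [Finset.mem_Icc] at hv'
    obtain ⟨h1, h2⟩ := hv'
    have hveq : v = w - (w - v) := by omega
    rw [hveq]
    set k := w - v with hkdef
    have hkK : k ≤ K := by omega
    have hc := hchain k hkK
    have hmono : (1+δ)^k ≤ (1+δ)^K := pow_le_pow_right₀ (by linarith) hkK
    nlinarith [tau_nonneg n m (w - k), hcon,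
      mul_nonneg (show (0:ℝ) ≤ (1+δ)^K - (1+δ)^k by linarith) (tau_nonneg n m (w-k)),
      mul_nonneg (show (0:ℝ) ≤ 2 - (1+δ)^K by linarith) (tau_nonneg n m (w-k))]

/-- for every `R* ∈ (0,1)` there are sequences `(m_l)`, `(r_l)` with
`m_l → ∞`, `r_l ≤ m_l`, and `R_n(r_l,m_l) → R*`. -/
theorem berman_rates_dense (n : ℕ) (hn : 2 ≤ n) (R : ℝ) (hR0 : 0 < R) (hR1 : R < 1) :
    ∃ m r : ℕ → ℕ,
      Filter.Tendsto m Filter.atTop Filter.atTop ∧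
      (∀ l, r l ≤ m l) ∧
      Filter.Tendsto (fun l => Rrate n (r l) (m l)) Filter.atTop (nhds R) := by
  classical
  have hRrate : ∀ r m : ℕ, Rrate n r m = ∑ w ∈ Finset.range (r+1), tau n m w := by
    intro r m
    unfold Rrate tau
    rw [Nat.cast_sum, Finset.sum_div]
  have hnr : (2:ℝ) ≤ (n:ℝ) := by exact_mod_cast hn
  let rfun : ℕ → ℕ := fun m => Nat.findGreatest (fun j => Rrate n j m ≤ R) m
  refine ⟨id, rfun, Filter.tendsto_id, fun l => Nat.findGreatest_le l, ?_⟩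
  rw [Metric.tendsto_atTop]
  intro ε hε
  have hev1 := tau_small n hn ε hε
  have hev2 : ∀ᶠ m in Filter.atTop, Rrate n 0 m ≤ R := by
    have h1 : Filter.Tendsto (fun m : ℕ => (n:ℝ)^m) Filter.atTop Filter.atTop :=
      tendsto_pow_atTop_atTop_of_one_lt (by linarith)
    filter_upwards [h1.eventually_ge_atTop (1/R)] with m hm
    have h2 : Rrate n 0 m = 1 / (n:ℝ)^m := by
      unfold Rrate
      simp
    rw [h2]
    have h3 : (0:ℝ) < (n:ℝ)^m := by positivity
    rw [div_le_iff₀ h3]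
    rw [div_le_iff₀ hR0] at hm
    nlinarith
  obtain ⟨N, hN⟩ := Filter.eventually_atTop.mp (hev1.and hev2)
  refine ⟨N, fun m hm => ?_⟩
  obtain ⟨hA, hB⟩ := hN m hm
  have hspec : Rrate n (rfun m) m ≤ R :=
    Nat.findGreatest_spec (P := fun j => Rrate n j m ≤ R) (Nat.zero_le m) hB
  have hrm : rfun m ≤ m := Nat.findGreatest_le m
  have hfull : Rrate n m m = 1 := by
    rw [hRrate]
    exact sum_tau n m hn
  have hlt : rfun m < m := by
    rcases lt_or_eq_of_le hrm with h | h
    · exact h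
    · exfalso
      have : Rrate n m m ≤ R := by rw [h] at hspec; exact hspec
      rw [hfull] at this
      linarith
  have hgr : ¬ (Rrate n (rfun m + 1) m ≤ R) :=
    Nat.findGreatest_is_greatest (P := fun j => Rrate n j m ≤ R) (n := m)
      (Nat.lt_succ_self _) (by omega)
  push_neg at hgr
  have hdiff : Rrate n (rfun m + 1) m = Rrate n (rfun m) m + tau n m (rfun m + 1) := by
    rw [hRrate, hRrate, Finset.sum_range_succ]
  have htau := hA (rfun m + 1)
  rw [Real.dist_eq, abs_lt]
  constructor
  · simp only [id]
    rw [hdiff] at hgr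
    linarith
  · simp only [id]
    linarith
end
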